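/- Let G be a finite group and H a core-free subgroup of G contained in a normal subgroup N of G such that the index of H in N is 2. Then N is an elementary abelian 2-group: every element g ∈ N satisfies g² = 1, and N is commutative. -/

import Mathlib

namespace Subgroup

variable {G : Type*} [Group G] {H N : Subgroup G}

theorem sq_mem_of_relIndex_eq_two (hidx : H.relIndex N = 2) {n : G} (hn : n ∈ N) :
    n ^ 2 ∈ H := by
  simpa [mem_subgroupOf] using sq_mem_of_index_two hidx (⟨n, hn⟩ : N)

/-- The conjugates of `n ∈ N` stay in `N`, so their squares, the conjugates of `n ^ 2`, lie in `H`. -/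
theorem sq_mem_normalCore_of_relIndex_eq_two [N.Normal] (hidx : H.relIndex N = 2) {n : G}
    (hn : n ∈ N) : n ^ 2 ∈ H.normalCore := fun g => by
  simpa only [conj_pow] using sq_mem_of_relIndex_eq_two hidx (Normal.conj_mem ‹_› n hn g)

end Subgroup

theorem mul_comm_of_sq_eq_one {G : Type*} [Group G] {a b : G} (ha : a ^ 2 = 1) (hb : b ^ 2 = 1)
    (hab : (a * b) ^ 2 = 1) : a * b = b * a := by
  have inv_eq_self {x : G} (hx : x ^ 2 = 1) : x⁻¹ = x :=
    inv_eq_of_mul_eq_one_right (pow_two x ▸ hx)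
  calc a * b = (a * b)⁻¹ := (inv_eq_self hab).symm
    _ = b * a := by rw [mul_inv_rev, inv_eq_self ha, inv_eq_self hb]

theorem corefree_index_two_elementary_abelian_general {G : Type*} [Group G]
    (H N : Subgroup G) [N.Normal] (hcf : H.normalCore = ⊥)
    (hidx : H.relIndex N = 2) :
    (∀ g ∈ N, g ^ 2 = 1) ∧ (∀ a ∈ N, ∀ b ∈ N, a * b = b * a) := by
  have sq_eq_one : ∀ g ∈ N, g ^ 2 = 1 := fun g hg => by
    simpa [hcf] using Subgroup.sq_mem_normalCore_of_relIndex_eq_two hidx hg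
  exact ⟨sq_eq_one, fun a ha b hb =>
    mul_comm_of_sq_eq_one (sq_eq_one a ha) (sq_eq_one b hb) (sq_eq_one _ (N.mul_mem ha hb))⟩

/-- Let `G` be a finite group and `H` a core-free subgroup of `G`
contained in a normal subgroup `N` with `[N : H] = 2`. Then `N` is an elementary
abelian 2-group: every `g ∈ N` satisfies `g ^ 2 = 1`, and `N` is commutative. -/
theorem corefree_index_two_elementary_abelian {G : Type*} [Group G] [Finite G]
    (H N : Subgroup G) [N.Normal] (hcf : H.normalCore = ⊥) (hHN : H ≤ N)
    (hidx : H.relIndex N = 2) :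
    (∀ g ∈ N, g ^ 2 = 1) ∧ (∀ a ∈ N, ∀ b ∈ N, a * b = b * a) :=
  corefree_index_two_elementary_abelian_general H N hcf hidx
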